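/- arXiv:2601.22496 — 2 statements merged into one kernel-verified Lean document; each statement's English description precedes it below -/
import Mathlib

section
/- Decomposition under value sufficiency: with Z = φ(S,G) and V = v(S,G), if there exists ṽ : 𝒮 × 𝒵 → 𝒱 with v(s,g) = ṽ(s, φ(s,g)) for every (s,g) with p(s,g) > 0 (i.e. Z is value-sufficient), then I(A;V|S,Z) = 0 and consequently I(A;G|S,Z) = I(A;G|S,V) − I(A;Z|S,V). -/
open scoped Classical
open Finset

/-- Joint probability `P(f = x)` of a discrete random variable `f` on the sample space
`𝒮 × 𝒢 × 𝒜` equipped with the pmf `p`. -/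
noncomputable def Pr {𝒮 𝒢 𝒜 : Type*} [Fintype 𝒮] [Fintype 𝒢] [Fintype 𝒜] {X : Type*}
    (p : 𝒮 × 𝒢 × 𝒜 → ℝ) (f : 𝒮 × 𝒢 × 𝒜 → X) (x : X) : ℝ :=
  ∑ ω : 𝒮 × 𝒢 × 𝒜, if f ω = x then p ω else 0

/-- Conditional mutual information `I(X;Y|W)` of discrete random variables that are
deterministic functions of a sample drawn from the pmf `p` on `𝒮 × 𝒢 × 𝒜`. -/
noncomputable def CMI {𝒮 𝒢 𝒜 : Type*} [Fintype 𝒮] [Fintype 𝒢] [Fintype 𝒜]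
    {X Y W : Type*} [Fintype X] [Fintype Y] [Fintype W]
    (p : 𝒮 × 𝒢 × 𝒜 → ℝ) (fX : 𝒮 × 𝒢 × 𝒜 → X) (fY : 𝒮 × 𝒢 × 𝒜 → Y)
    (fW : 𝒮 × 𝒢 × 𝒜 → W) : ℝ :=
  ∑ x : X, ∑ y : Y, ∑ w : W,
    if 0 < Pr p (fun ω => (fX ω, fY ω, fW ω)) (x, y, w) then
      Pr p (fun ω => (fX ω, fY ω, fW ω)) (x, y, w) *
        Real.log ((Pr p (fun ω => (fX ω, fY ω, fW ω)) (x, y, w) * Pr p fW w) /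
          (Pr p (fun ω => (fX ω, fW ω)) (x, w) * Pr p (fun ω => (fY ω, fW ω)) (y, w)))
    else 0

/-- Marginal `p(s,g) := ∑ₐ p(s,g,a)`. -/
noncomputable def pSG {𝒮 𝒢 𝒜 : Type*} [Fintype 𝒜] (p : 𝒮 × 𝒢 × 𝒜 → ℝ) (s : 𝒮) (g : 𝒢) : ℝ :=
  ∑ a : 𝒜, p (s, g, a)

/-- Conditional `p(a|s,g) := p(s,g,a) / p(s,g)`. -/
noncomputable def pA {𝒮 𝒢 𝒜 : Type*} [Fintype 𝒜] (p : 𝒮 × 𝒢 × 𝒜 → ℝ) (s : 𝒮) (g : 𝒢)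
    (a : 𝒜) : ℝ :=
  p (s, g, a) / pSG p s g

/-
On the support of `p`, `V` is a function of `(S, Z)` by value sufficiency, and `Z = φ(S, G)` is a
function of `(S, G)`. Once `(S, Z)` is known, `V` is known, so `I(A;V|S,Z) = 0`, and the
conditions `(S, Z)` and `(Z, S, V)` carry the same information. The chain rule
`I(A;G,Z|S,V) = I(A;Z|S,V) + I(A;G|Z,S,V)` then gives the decomposition, because adding `Z` to `G`
changes nothing given `S`.
-/

def Determines {Ω X Y : Type*} (p : Ω → ℝ) (f : Ω → X) (g : Ω → Y) : Prop :=
  ∃ h : X → Y, ∀ ω, 0 < p ω → g ω = h (f ω)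

namespace Determines

variable {Ω X Y Z : Type*} {p : Ω → ℝ} {f : Ω → X} {g : Ω → Y} {k : Ω → Z}

protected theorem refl (p : Ω → ℝ) (f : Ω → X) : Determines p f f :=
  ⟨id, fun _ _ => rfl⟩

theorem prodMk (hg : Determines p f g) (hk : Determines p f k) :
    Determines p f (fun ω => (g ω, k ω)) := by
  obtain ⟨hg, hhg⟩ := hg
  obtain ⟨hk, hhk⟩ := hk
  exact ⟨fun x => (hg x, hk x), fun ω hω => Prod.ext (hhg ω hω) (hhk ω hω)⟩

theorem prodMk_left (hg : Determines p f g) (k : Ω → Z) :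
    Determines p (fun ω => (k ω, f ω)) (fun ω => (k ω, g ω)) := by
  obtain ⟨h, hh⟩ := hg
  exact ⟨fun x => (x.1, h x.2), fun ω hω => Prod.ext rfl (hh ω hω)⟩

end Determines

theorem sum_mul_congr_of_pos {Ω : Type*} [Fintype Ω] {p F G : Ω → ℝ} (hp0 : ∀ ω, 0 ≤ p ω)
    (h : ∀ ω, 0 < p ω → F ω = G ω) : ∑ ω, p ω * F ω = ∑ ω, p ω * G ω := by
  refine Finset.sum_congr rfl fun ω _ => ?_
  rcases (hp0 ω).eq_or_lt with h0 | h0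
  · simp [← h0]
  · rw [h ω h0]

section Probability

theorem pSG_pos_of_pos {𝒮 𝒢 𝒜 : Type*} [Fintype 𝒜] {p : 𝒮 × 𝒢 × 𝒜 → ℝ}
    (hp0 : ∀ ω, 0 ≤ p ω) {s : 𝒮} {g : 𝒢} {a : 𝒜} (h : 0 < p (s, g, a)) : 0 < pSG p s g :=
  h.trans_le (Finset.single_le_sum (f := fun a' => p (s, g, a')) (fun _ _ => hp0 _)
    (Finset.mem_univ a))

variable {𝒮 𝒢 𝒜 : Type*} [Fintype 𝒮] [Fintype 𝒢] [Fintype 𝒜] {p : 𝒮 × 𝒢 × 𝒜 → ℝ}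

theorem Pr_nonneg (hp0 : ∀ ω, 0 ≤ p ω) {X : Type*} (f : 𝒮 × 𝒢 × 𝒜 → X) (x : X) :
    0 ≤ Pr p f x :=
  Finset.sum_nonneg fun ω _ => by split_ifs <;> simp [hp0 ω]

theorem Pr_pos_of_pos (hp0 : ∀ ω, 0 ≤ p ω) {X : Type*} (f : 𝒮 × 𝒢 × 𝒜 → X)
    {ω : 𝒮 × 𝒢 × 𝒜} (hω : 0 < p ω) : 0 < Pr p f (f ω) := by
  have h := Finset.single_le_sum (f := fun ω' => if f ω' = f ω then p ω' else 0)
    (fun ω' _ => by split_ifs <;> simp [hp0 ω']) (Finset.mem_univ ω)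
  simp only at h
  exact hω.trans_le h

theorem Pr_congr (hp0 : ∀ ω, 0 ≤ p ω) {X Y : Type*} {f : 𝒮 × 𝒢 × 𝒜 → X}
    {g : 𝒮 × 𝒢 × 𝒜 → Y} {x : X} {y : Y} (h : ∀ ω, 0 < p ω → (f ω = x ↔ g ω = y)) :
    Pr p f x = Pr p g y := by
  refine Finset.sum_congr rfl fun ω _ => ?_
  rcases (hp0 ω).eq_or_lt with h0 | h0
  · simp [← h0]
  · rw [if_congr (h ω h0) rfl rfl]

theorem Pr_eq_of_determines (hp0 : ∀ ω, 0 ≤ p ω) {X Y : Type*} {f : 𝒮 × 𝒢 × 𝒜 → X}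
    {g : 𝒮 × 𝒢 × 𝒜 → Y} (hfg : Determines p f g) (hgf : Determines p g f)
    {ω : 𝒮 × 𝒢 × 𝒜} (hω : 0 < p ω) : Pr p f (f ω) = Pr p g (g ω) := by
  obtain ⟨h, hh⟩ := hfg
  obtain ⟨h', hh'⟩ := hgf
  refine Pr_congr hp0 fun ω' hω' => ⟨fun e => ?_, fun e => ?_⟩
  · rw [hh ω' hω', hh ω hω, e]
  · rw [hh' ω' hω', hh' ω hω, e]

theorem sum_ite_pos_Pr_mul (hp0 : ∀ ω, 0 ≤ p ω) {X : Type*} [Fintype X]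
    (f : 𝒮 × 𝒢 × 𝒜 → X) (F : X → ℝ) :
    (∑ x : X, if 0 < Pr p f x then Pr p f x * F x else 0) = ∑ ω, p ω * F (f ω) := by
  have h : ∀ x, (if 0 < Pr p f x then Pr p f x * F x else 0) = Pr p f x * F x := fun x => by
    split_ifs with hx
    · rfl
    · rw [le_antisymm (not_lt.1 hx) (Pr_nonneg hp0 f x), zero_mul]
  simp_rw [h, Pr, Finset.sum_mul, ite_mul, zero_mul]
  rw [Finset.sum_comm]
  simp

theorem CMI_eq_sum_mul_log (hp0 : ∀ ω, 0 ≤ p ω) {X Y W : Type*} [Fintype X] [Fintype Y]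
    [Fintype W] (fX : 𝒮 × 𝒢 × 𝒜 → X) (fY : 𝒮 × 𝒢 × 𝒜 → Y) (fW : 𝒮 × 𝒢 × 𝒜 → W) :
    CMI p fX fY fW = ∑ ω, p ω *
      Real.log ((Pr p (fun ω' => (fX ω', fY ω', fW ω')) (fX ω, fY ω, fW ω) * Pr p fW (fW ω)) /
        (Pr p (fun ω' => (fX ω', fW ω')) (fX ω, fW ω) *
          Pr p (fun ω' => (fY ω', fW ω')) (fY ω, fW ω))) := by
  rw [CMI, ← sum_ite_pos_Pr_mul hp0 (fun ω => (fX ω, fY ω, fW ω)) fun t =>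
    Real.log ((Pr p (fun ω' => (fX ω', fY ω', fW ω')) t * Pr p fW t.2.2) /
      (Pr p (fun ω' => (fX ω', fW ω')) (t.1, t.2.2) *
        Pr p (fun ω' => (fY ω', fW ω')) (t.2.1, t.2.2)))]
  simp only [Fintype.sum_prod_type]

variable {X Y Y' Z W W' : Type*} [Fintype X] [Fintype Y] [Fintype Y'] [Fintype Z] [Fintype W]
  [Fintype W']

theorem CMI_eq_zero_of_determines (hp0 : ∀ ω, 0 ≤ p ω) (fX : 𝒮 × 𝒢 × 𝒜 → X)
    {fY : 𝒮 × 𝒢 × 𝒜 → Y} {fW : 𝒮 × 𝒢 × 𝒜 → W} (hWY : Determines p fW fY) :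
    CMI p fX fY fW = 0 := by
  have hYW : Determines p fW (fun ω => (fY ω, fW ω)) := hWY.prodMk (.refl p fW)
  have hWYW : Determines p (fun ω => (fY ω, fW ω)) fW := ⟨Prod.snd, fun _ _ => rfl⟩
  rw [CMI_eq_sum_mul_log hp0, ← Finset.sum_eq_zero fun ω _ => mul_zero (p ω)]
  refine sum_mul_congr_of_pos hp0 fun ω hω => ?_
  rw [Pr_eq_of_determines hp0 (hWYW.prodMk_left fX) (hYW.prodMk_left fX) hω,
    Pr_eq_of_determines hp0 hWYW hYW hω,
    div_self (mul_pos (Pr_pos_of_pos hp0 _ hω) (Pr_pos_of_pos hp0 _ hω)).ne', Real.log_one]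

theorem CMI_congr (hp0 : ∀ ω, 0 ≤ p ω) (fX : 𝒮 × 𝒢 × 𝒜 → X) {fY : 𝒮 × 𝒢 × 𝒜 → Y}
    {fY' : 𝒮 × 𝒢 × 𝒜 → Y'} {fW : 𝒮 × 𝒢 × 𝒜 → W} {fW' : 𝒮 × 𝒢 × 𝒜 → W'}
    (hY : Determines p (fun ω => (fY ω, fW ω)) (fun ω => (fY' ω, fW' ω)))
    (hY' : Determines p (fun ω => (fY' ω, fW' ω)) (fun ω => (fY ω, fW ω)))
    (hW : Determines p fW fW') (hW' : Determines p fW' fW) :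
    CMI p fX fY fW = CMI p fX fY' fW' := by
  rw [CMI_eq_sum_mul_log hp0, CMI_eq_sum_mul_log hp0]
  refine sum_mul_congr_of_pos hp0 fun ω hω => ?_
  rw [Pr_eq_of_determines hp0 (hY.prodMk_left fX) (hY'.prodMk_left fX) hω,
    Pr_eq_of_determines hp0 hW hW' hω,
    Pr_eq_of_determines hp0 (hW.prodMk_left fX) (hW'.prodMk_left fX) hω,
    Pr_eq_of_determines hp0 hY hY' hω]

theorem CMI_prod_eq_add (hp0 : ∀ ω, 0 ≤ p ω) (fX : 𝒮 × 𝒢 × 𝒜 → X) (fY : 𝒮 × 𝒢 × 𝒜 → Y)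
    (fZ : 𝒮 × 𝒢 × 𝒜 → Z) (fW : 𝒮 × 𝒢 × 𝒜 → W) :
    CMI p fX (fun ω => (fY ω, fZ ω)) fW =
      CMI p fX fZ fW + CMI p fX fY (fun ω => (fZ ω, fW ω)) := by
  rw [CMI_eq_sum_mul_log hp0, CMI_eq_sum_mul_log hp0, CMI_eq_sum_mul_log hp0,
    ← Finset.sum_add_distrib]
  simp_rw [← mul_add]
  refine sum_mul_congr_of_pos hp0 fun ω hω => ?_
  have hXYZW : Pr p (fun ω => (fX ω, (fY ω, fZ ω), fW ω)) (fX ω, (fY ω, fZ ω), fW ω) =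
      Pr p (fun ω => (fX ω, fY ω, fZ ω, fW ω)) (fX ω, fY ω, fZ ω, fW ω) :=
    Pr_eq_of_determines hp0 ⟨fun t => (t.1, t.2.1.1, t.2.1.2, t.2.2), fun _ _ => rfl⟩
      ⟨fun t => (t.1, (t.2.1, t.2.2.1), t.2.2.2), fun _ _ => rfl⟩ hω
  have hYZW : Pr p (fun ω => ((fY ω, fZ ω), fW ω)) ((fY ω, fZ ω), fW ω) =
      Pr p (fun ω => (fY ω, fZ ω, fW ω)) (fY ω, fZ ω, fW ω) :=
    Pr_eq_of_determines hp0 ⟨fun t => (t.1.1, t.1.2, t.2), fun _ _ => rfl⟩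
      ⟨fun t => ((t.1, t.2.1), t.2.2), fun _ _ => rfl⟩ hω
  have log_split : ∀ a b c d e f : ℝ, 0 < a → 0 < b → 0 < c → 0 < d → 0 < e → 0 < f →
      Real.log (a * b / (c * d)) = Real.log (e * b / (c * f)) + Real.log (a * f / (e * d)) := by
    intro a b c d e f ha hb hc hd he hf
    rw [← Real.log_mul (by positivity) (by positivity)]
    congr 1
    field_simp
  rw [hXYZW, hYZW]
  exact log_split _ _ _ _ _ _ (Pr_pos_of_pos hp0 _ hω) (Pr_pos_of_pos hp0 _ hω)
    (Pr_pos_of_pos hp0 _ hω) (Pr_pos_of_pos hp0 _ hω) (Pr_pos_of_pos hp0 _ hω)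
    (Pr_pos_of_pos hp0 _ hω)

end Probability

theorem cmi_decomposition_of_value_sufficiency_general {𝒮 𝒢 𝒜 𝒵 𝒱 : Type*}
    [Fintype 𝒮] [Fintype 𝒢] [Fintype 𝒜] [Fintype 𝒵] [Fintype 𝒱]
    (p : 𝒮 × 𝒢 × 𝒜 → ℝ) (hp0 : ∀ ω, 0 ≤ p ω)
    (φ : 𝒮 × 𝒢 → 𝒵) (v : 𝒮 × 𝒢 → 𝒱)
    (hvs : ∃ vTilde : 𝒮 × 𝒵 → 𝒱, ∀ s g, 0 < pSG p s g → v (s, g) = vTilde (s, φ (s, g))) :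
    CMI p (fun ω => ω.2.2) (fun ω => v (ω.1, ω.2.1))
        (fun ω => (ω.1, φ (ω.1, ω.2.1))) = 0 ∧
      CMI p (fun ω => ω.2.2) (fun ω => ω.2.1) (fun ω => (ω.1, φ (ω.1, ω.2.1))) =
        CMI p (fun ω => ω.2.2) (fun ω => ω.2.1) (fun ω => (ω.1, v (ω.1, ω.2.1))) -
          CMI p (fun ω => ω.2.2) (fun ω => φ (ω.1, ω.2.1))
            (fun ω => (ω.1, v (ω.1, ω.2.1))) := by
  obtain ⟨vTilde, hvTilde⟩ := hvs
  have hV : Determines p (fun ω => (ω.1, φ (ω.1, ω.2.1))) (fun ω => v (ω.1, ω.2.1)) :=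
    ⟨vTilde, fun _ hω => hvTilde _ _ (pSG_pos_of_pos hp0 hω)⟩
  refine ⟨CMI_eq_zero_of_determines hp0 _ hV, ?_⟩
  have hZSV_SZ : Determines p (fun ω => (φ (ω.1, ω.2.1), ω.1, v (ω.1, ω.2.1)))
      (fun ω => (ω.1, φ (ω.1, ω.2.1))) := ⟨fun t => (t.2.1, t.1), fun _ _ => rfl⟩
  have hSZ_ZSV : Determines p (fun ω => (ω.1, φ (ω.1, ω.2.1)))
      (fun ω => (φ (ω.1, ω.2.1), ω.1, v (ω.1, ω.2.1))) :=
    Determines.prodMk ⟨Prod.snd, fun _ _ => rfl⟩ (Determines.prodMk ⟨Prod.fst, fun _ _ => rfl⟩ hV)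
  have hGZ : CMI p (fun ω => ω.2.2) (fun ω => ω.2.1) (fun ω => (ω.1, v (ω.1, ω.2.1))) =
      CMI p (fun ω => ω.2.2) (fun ω => (ω.2.1, φ (ω.1, ω.2.1)))
        (fun ω => (ω.1, v (ω.1, ω.2.1))) :=
    CMI_congr hp0 _ ⟨fun t => ((t.1, φ (t.2.1, t.1)), t.2), fun _ _ => rfl⟩
      ⟨fun t => (t.1.1, t.2), fun _ _ => rfl⟩ (.refl _ _) (.refl _ _)
  rw [hGZ, CMI_prod_eq_add hp0,
    CMI_congr hp0 _ (hZSV_SZ.prodMk_left _) (hSZ_ZSV.prodMk_left _) hZSV_SZ hSZ_ZSV]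
  ring

/-- **Decomposition under value sufficiency.** With `Z = φ(S,G)` and
`V = v(S,G)`, if `v` factors through `(s, φ(s,g))` on the support of `p` (value
sufficiency), then `I(A;V|S,Z) = 0` and `I(A;G|S,Z) = I(A;G|S,V) − I(A;Z|S,V)`. -/
theorem cmi_decomposition_of_value_sufficiency {𝒮 𝒢 𝒜 𝒵 𝒱 : Type*}
    [Fintype 𝒮] [Fintype 𝒢] [Fintype 𝒜] [Fintype 𝒵] [Fintype 𝒱]
    [Nonempty 𝒮] [Nonempty 𝒢] [Nonempty 𝒜] [Nonempty 𝒵] [Nonempty 𝒱]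
    (p : 𝒮 × 𝒢 × 𝒜 → ℝ) (hp0 : ∀ ω, 0 ≤ p ω) (hp1 : ∑ ω : 𝒮 × 𝒢 × 𝒜, p ω = 1)
    (φ : 𝒮 × 𝒢 → 𝒵) (v : 𝒮 × 𝒢 → 𝒱)
    (hvs : ∃ vTilde : 𝒮 × 𝒵 → 𝒱, ∀ s g, 0 < pSG p s g → v (s, g) = vTilde (s, φ (s, g))) :
    CMI p (fun ω => ω.2.2) (fun ω => v (ω.1, ω.2.1))
        (fun ω => (ω.1, φ (ω.1, ω.2.1))) = 0 ∧
      CMI p (fun ω => ω.2.2) (fun ω => ω.2.1) (fun ω => (ω.1, φ (ω.1, ω.2.1))) =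
        CMI p (fun ω => ω.2.2) (fun ω => ω.2.1) (fun ω => (ω.1, v (ω.1, ω.2.1))) -
          CMI p (fun ω => ω.2.2) (fun ω => φ (ω.1, ω.2.1))
            (fun ω => (ω.1, v (ω.1, ω.2.1))) :=
  cmi_decomposition_of_value_sufficiency_general p hp0 φ v hvs
end

section
/- Near-optimal actor NLL implies approximate action sufficiency: with Z = φ(S,G), for every policy π the action sufficiency gap is bounded by the excess log-loss, I(A;G|S,Z) ≤ L_act(π;φ) − H(A|S,G). Consequently, if L_act(π;φ) ≤ H(A|S,G) + ε for some ε ≥ 0, then I(A;G|S,Z) ≤ ε. -/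
open scoped Classical
open Finset

/-- Induced representation-conditioned distribution
`p(a|s,z) := (∑_{g' : φ(s,g')=z} p(s,g',a)) / (∑_{g' : φ(s,g')=z} p(s,g'))`. -/
noncomputable def pAZ {𝒮 𝒢 𝒜 𝒵 : Type*} [Fintype 𝒢] [Fintype 𝒜] (p : 𝒮 × 𝒢 × 𝒜 → ℝ)
    (φ : 𝒮 × 𝒢 → 𝒵) (s : 𝒮) (z : 𝒵) (a : 𝒜) : ℝ :=
  (∑ g' : 𝒢, if φ (s, g') = z then p (s, g', a) else 0) /
    (∑ g' : 𝒢, if φ (s, g') = z then pSG p s g' else 0)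

/-- The conditional KL risk `R(π;φ)`. -/
noncomputable def KLRisk {𝒮 𝒢 𝒜 𝒵 : Type*} [Fintype 𝒮] [Fintype 𝒢] [Fintype 𝒜]
    (p : 𝒮 × 𝒢 × 𝒜 → ℝ) (φ : 𝒮 × 𝒢 → 𝒵) (π : 𝒮 → 𝒵 → 𝒜 → ℝ) : ℝ :=
  ∑ s : 𝒮, ∑ g : 𝒢,
    if 0 < pSG p s g then
      pSG p s g * ∑ a : 𝒜,
        (if 0 < pA p s g a then pA p s g a * Real.log (pA p s g a / π s (φ (s, g)) a) else 0)
    else 0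

/-- The actor log-loss `L_act(π;φ) := ∑_{p(s,g,a)>0} p(s,g,a) · (− log π(a|s,φ(s,g)))`. -/
noncomputable def Lact {𝒮 𝒢 𝒜 𝒵 : Type*} [Fintype 𝒮] [Fintype 𝒢] [Fintype 𝒜]
    (p : 𝒮 × 𝒢 × 𝒜 → ℝ) (φ : 𝒮 × 𝒢 → 𝒵) (π : 𝒮 → 𝒵 → 𝒜 → ℝ) : ℝ :=
  ∑ s : 𝒮, ∑ g : 𝒢, ∑ a : 𝒜,
    if 0 < p (s, g, a) then p (s, g, a) * (-Real.log (π s (φ (s, g)) a)) else 0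

/-- The conditional entropy `H(A|S,G) := −∑_{p(s,g,a)>0} p(s,g,a) · log p(a|s,g)`. -/
noncomputable def HASG {𝒮 𝒢 𝒜 : Type*} [Fintype 𝒮] [Fintype 𝒢] [Fintype 𝒜]
    (p : 𝒮 × 𝒢 × 𝒜 → ℝ) : ℝ :=
  -∑ s : 𝒮, ∑ g : 𝒢, ∑ a : 𝒜,
    if 0 < p (s, g, a) then p (s, g, a) * Real.log (pA p s g a) else 0

/-- The conditional entropy `H(A|S,Z) := −∑_{p(s,g,a)>0} p(s,g,a) · log p(a|s,φ(s,g))`. -/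
noncomputable def HASZ {𝒮 𝒢 𝒜 𝒵 : Type*} [Fintype 𝒮] [Fintype 𝒢] [Fintype 𝒜]
    (p : 𝒮 × 𝒢 × 𝒜 → ℝ) (φ : 𝒮 × 𝒢 → 𝒵) : ℝ :=
  -∑ s : 𝒮, ∑ g : 𝒢, ∑ a : 𝒜,
    if 0 < p (s, g, a) then p (s, g, a) * Real.log (pAZ p φ s (φ (s, g)) a) else 0

/-!
Both sides are expectations under `p`: `I(A;G|S,Z) = 𝔼 log (p(a|s,g) / p(a|s,z))`, while
`L_act(π;φ) − H(A|S,G) = 𝔼 log (p(a|s,g) / π(a|s,z))`. Their difference is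
`𝔼 log (p(a|s,z) / π(a|s,z))`, which regroups over the fibres of `φ(s,·)` into a
`p(s,z)`-weighted sum of divergences `KL(p(·|s,z) ‖ π(·|s,z))`, nonnegative by Gibbs' inequality.
-/

theorem mul_log_div_le_sub {q r : ℝ} (hq : 0 ≤ q) (hr : 0 < r) :
    q * Real.log (r / q) ≤ r - q := by
  rcases hq.eq_or_lt with rfl | hq
  · simpa using hr.le
  · calc q * Real.log (r / q) ≤ q * (r / q - 1) :=
          mul_le_mul_of_nonneg_left (Real.log_le_sub_one_of_pos (div_pos hr hq)) hq.le
      _ = r - q := by field_simp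

/-- Gibbs' inequality `KL(q / Q ‖ r) ≥ 0`, multiplied through by `Q = ∑ q`. -/
theorem sum_mul_log_le_sum_mul_log_div_sum {ι : Type*} [Fintype ι] {q r : ι → ℝ}
    (hq : ∀ i, 0 ≤ q i) (hr : ∀ i, 0 < r i) (hr1 : ∑ i, r i ≤ 1) :
    ∑ i, q i * Real.log (r i) ≤ ∑ i, q i * Real.log (q i / ∑ j, q j) := by
  set Q := ∑ j, q j
  have hQ : 0 ≤ Q := sum_nonneg fun i _ => hq i
  have hterm : ∀ i, q i * Real.log (r i) - q i * Real.log (q i / Q) ≤ r i * Q - q i := by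
    intro i
    rcases (hq i).eq_or_lt with hi | hi
    · simpa [← hi] using mul_nonneg (hr i).le hQ
    · have hQpos : 0 < Q := hi.trans_le (single_le_sum (fun j _ => hq j) (mem_univ i))
      have hrQ : 0 < r i * Q := mul_pos (hr i) hQpos
      calc q i * Real.log (r i) - q i * Real.log (q i / Q)
            = q i * Real.log (r i * Q / q i) := by
            rw [Real.log_div hi.ne' hQpos.ne', Real.log_div hrQ.ne' hi.ne',
              Real.log_mul (hr i).ne' hQpos.ne']
            ring
        _ ≤ r i * Q - q i := mul_log_div_le_sub hi.le hrQ
  have hsum := sum_le_sum fun i (_ : i ∈ univ) => hterm i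
  rw [sum_sub_distrib, sum_sub_distrib, ← sum_mul] at hsum
  linarith [mul_le_mul_of_nonneg_right hr1 hQ]

theorem sum_mul_comp_eq_sum_fiber_mul {ι κ : Type*} [Fintype ι] [Fintype κ]
    (h : ι → κ) (w : ι → ℝ) (F : κ → ℝ) :
    ∑ i, w i * F (h i) = ∑ k, (∑ i, if h i = k then w i else 0) * F k := by
  rw [← sum_fiberwise univ h]
  refine sum_congr rfl fun k _ => ?_
  rw [← sum_filter, sum_mul]
  exact sum_congr rfl fun i hi => by rw [(mem_filter.mp hi).2]

theorem ite_pos_mul_eq {x : ℝ} (hx : 0 ≤ x) (y : ℝ) : (if 0 < x then x * y else 0) = x * y := by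
  rcases hx.eq_or_lt with rfl | hx <;> simp [*]

section Marginals

variable {𝒮 𝒢 𝒜 𝒵 : Type*} [Fintype 𝒢] [Fintype 𝒜]
  (p : 𝒮 × 𝒢 × 𝒜 → ℝ) (φ : 𝒮 × 𝒢 → 𝒵)

noncomputable def pSZA (s : 𝒮) (z : 𝒵) (a : 𝒜) : ℝ :=
  ∑ g : 𝒢, if φ (s, g) = z then p (s, g, a) else 0

noncomputable def pSZ (s : 𝒮) (z : 𝒵) : ℝ :=
  ∑ g : 𝒢, if φ (s, g) = z then pSG p s g else 0

theorem pAZ_eq_div (s : 𝒮) (z : 𝒵) (a : 𝒜) :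
    pAZ p φ s z a = pSZA p φ s z a / pSZ p φ s z :=
  rfl

theorem pSZ_eq_sum_pSZA (s : 𝒮) (z : 𝒵) : pSZ p φ s z = ∑ a, pSZA p φ s z a := by
  simp only [pSZ, pSZA, pSG, ite_sum_zero]
  exact sum_comm

theorem sum_mul_comp_eq_sum_pSZA_mul [Fintype 𝒵] (s : 𝒮) (f : 𝒵 → 𝒜 → ℝ) :
    ∑ g, ∑ a, p (s, g, a) * f (φ (s, g)) a = ∑ z, ∑ a, pSZA p φ s z a * f z a := by
  rw [sum_comm, sum_comm (s := univ (α := 𝒵))]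
  refine sum_congr rfl fun a _ => ?_
  rw [sum_mul_comp_eq_sum_fiber_mul (fun g => φ (s, g)) (fun g => p (s, g, a)) (f · a)]
  rfl

variable {p} (hp0 : ∀ ω, 0 ≤ p ω)
include hp0

omit [Fintype 𝒢] in
theorem pSG_pos {s : 𝒮} {g : 𝒢} {a : 𝒜} (h : 0 < p (s, g, a)) : 0 < pSG p s g :=
  h.trans_le <| single_le_sum (f := fun a => p (s, g, a)) (fun _ _ => hp0 _) (mem_univ a)

omit [Fintype 𝒜] in
theorem pSZA_nonneg (s : 𝒮) (z : 𝒵) (a : 𝒜) : 0 ≤ pSZA p φ s z a :=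
  sum_nonneg fun _ _ => by split_ifs <;> simp [hp0]

omit [Fintype 𝒜] in
theorem pSZA_pos {s : 𝒮} {g : 𝒢} {a : 𝒜} (h : 0 < p (s, g, a)) :
    0 < pSZA p φ s (φ (s, g)) a :=
  calc 0 < if φ (s, g) = φ (s, g) then p (s, g, a) else 0 := by rwa [if_pos rfl]
    _ ≤ pSZA p φ s (φ (s, g)) a :=
      single_le_sum (f := fun g' => if φ (s, g') = φ (s, g) then p (s, g', a) else 0)
        (fun _ _ => by split_ifs <;> simp [hp0]) (mem_univ g)

theorem pSZ_pos {s : 𝒮} {g : 𝒢} {a : 𝒜} (h : 0 < p (s, g, a)) :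
    0 < pSZ p φ s (φ (s, g)) := by
  rw [pSZ_eq_sum_pSZA]
  exact (pSZA_pos φ hp0 h).trans_le <|
    single_le_sum (fun a' _ => pSZA_nonneg φ hp0 s _ a') (mem_univ a)

theorem cmi_summand_eq (s : 𝒮) (g : 𝒢) (a : 𝒜) :
    (if 0 < p (s, g, a) then
      p (s, g, a) * Real.log (p (s, g, a) * pSZ p φ s (φ (s, g)) /
        (pSZA p φ s (φ (s, g)) a * pSG p s g)) else 0) =
      p (s, g, a) * (Real.log (pA p s g a) - Real.log (pAZ p φ s (φ (s, g)) a)) := by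
  split_ifs with h
  · have := pSG_pos hp0 h
    have := pSZA_pos φ hp0 h
    have := pSZ_pos φ hp0 h
    rw [pAZ_eq_div, pA, ← Real.log_div (by positivity) (by positivity)]
    congr 2
    field_simp
  · simp [le_antisymm (not_lt.mp h) (hp0 _)]

end Marginals

section Expectations

variable {𝒮 𝒢 𝒜 𝒵 : Type*} [Fintype 𝒮] [Fintype 𝒢] [Fintype 𝒜]
  (p : 𝒮 × 𝒢 × 𝒜 → ℝ) (φ : 𝒮 × 𝒢 → 𝒵)

theorem Pr_AGSZ_eq (a : 𝒜) (g : 𝒢) (s : 𝒮) (z : 𝒵) :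
    Pr p (fun ω => (ω.2.2, ω.2.1, (ω.1, φ (ω.1, ω.2.1)))) (a, g, (s, z)) =
      if φ (s, g) = z then p (s, g, a) else 0 := by
  simp [Pr, Fintype.sum_prod_type, Prod.ext_iff, ite_and]

theorem Pr_SZ_eq (s : 𝒮) (z : 𝒵) :
    Pr p (fun ω => (ω.1, φ (ω.1, ω.2.1))) (s, z) = pSZ p φ s z := by
  rw [pSZ_eq_sum_pSZA]
  simp only [Pr, pSZA, Prod.ext_iff, ite_and, Fintype.sum_prod_type, sum_ite_irrel,
    sum_const_zero, sum_ite_eq', mem_univ, ↓reduceIte]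
  exact sum_comm

theorem Pr_ASZ_eq (a : 𝒜) (s : 𝒮) (z : 𝒵) :
    Pr p (fun ω => (ω.2.2, (ω.1, φ (ω.1, ω.2.1)))) (a, (s, z)) = pSZA p φ s z a := by
  simp [Pr, pSZA, Fintype.sum_prod_type, Prod.ext_iff, ite_and]

theorem Pr_GSZ_eq (g : 𝒢) (s : 𝒮) (z : 𝒵) :
    Pr p (fun ω => (ω.2.1, (ω.1, φ (ω.1, ω.2.1)))) (g, (s, z)) =
      if φ (s, g) = z then pSG p s g else 0 := by
  simp only [Pr, pSG, Prod.ext_iff, ite_and, Fintype.sum_prod_type, sum_ite_irrel,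
    sum_const_zero, sum_ite_eq', mem_univ, ↓reduceIte]
  rw [ite_sum_zero]

variable {p} (hp0 : ∀ ω, 0 ≤ p ω)
include hp0

theorem Lact_eq (π : 𝒮 → 𝒵 → 𝒜 → ℝ) :
    Lact p φ π = -∑ s, ∑ g, ∑ a, p (s, g, a) * Real.log (π s (φ (s, g)) a) := by
  simp only [Lact, ite_pos_mul_eq (hp0 _)]
  simp only [mul_neg, sum_neg_distrib]

omit φ in
theorem HASG_eq : HASG p = -∑ s, ∑ g, ∑ a, p (s, g, a) * Real.log (pA p s g a) := by
  simp only [HASG, ite_pos_mul_eq (hp0 _)]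

variable [Fintype 𝒵]

theorem CMI_A_G_SZ_eq :
    CMI p (fun ω => ω.2.2) (fun ω => ω.2.1) (fun ω => (ω.1, φ (ω.1, ω.2.1))) =
      ∑ s, ∑ g, ∑ a,
        p (s, g, a) * (Real.log (pA p s g a) - Real.log (pAZ p φ s (φ (s, g)) a)) := by
  simp only [CMI, Fintype.sum_prod_type, Pr_AGSZ_eq, Pr_SZ_eq,
    Pr_ASZ_eq, Pr_GSZ_eq]
  calc _ = ∑ a, ∑ g, ∑ s,
        p (s, g, a) * (Real.log (pA p s g a) - Real.log (pAZ p φ s (φ (s, g)) a)) := by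
        refine sum_congr rfl fun a _ => sum_congr rfl fun g _ => sum_congr rfl fun s _ => ?_
        rw [sum_eq_single (φ (s, g)) (fun z _ hz => by simp [Ne.symm hz]) (by simp)]
        simpa only [if_true] using cmi_summand_eq φ hp0 s g a
    _ = _ := by
        rw [sum_comm]
        simp_rw [sum_comm (γ := 𝒜)]
        rw [sum_comm]

theorem sum_mul_log_le_sum_mul_log_pAZ (π : 𝒮 → 𝒵 → 𝒜 → ℝ)
    (hπpos : ∀ s z a, 0 < π s z a) (hπsum : ∀ s z, ∑ a, π s z a ≤ 1) :
    ∑ s, ∑ g, ∑ a, p (s, g, a) * Real.log (π s (φ (s, g)) a) ≤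
      ∑ s, ∑ g, ∑ a, p (s, g, a) * Real.log (pAZ p φ s (φ (s, g)) a) := by
  refine sum_le_sum fun s _ => ?_
  rw [sum_mul_comp_eq_sum_pSZA_mul p φ s (fun z a => Real.log (π s z a)),
    sum_mul_comp_eq_sum_pSZA_mul p φ s (fun z a => Real.log (pAZ p φ s z a))]
  refine sum_le_sum fun z _ => ?_
  simp only [pAZ_eq_div, pSZ_eq_sum_pSZA]
  exact sum_mul_log_le_sum_mul_log_div_sum (pSZA_nonneg φ hp0 s z) (hπpos s z) (hπsum s z)

end Expectations

theorem cmi_le_excess_logloss_general {𝒮 𝒢 𝒜 𝒵 : Type*}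
    [Fintype 𝒮] [Fintype 𝒢] [Fintype 𝒜] [Fintype 𝒵]
    (p : 𝒮 × 𝒢 × 𝒜 → ℝ) (hp0 : ∀ ω, 0 ≤ p ω)
    (φ : 𝒮 × 𝒢 → 𝒵) (π : 𝒮 → 𝒵 → 𝒜 → ℝ)
    (hπpos : ∀ s z a, 0 < π s z a) (hπsum : ∀ s z, ∑ a : 𝒜, π s z a = 1) :
    CMI p (fun ω => ω.2.2) (fun ω => ω.2.1) (fun ω => (ω.1, φ (ω.1, ω.2.1))) ≤
        Lact p φ π - HASG p ∧
      ∀ ε : ℝ, 0 ≤ ε → Lact p φ π ≤ HASG p + ε →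
        CMI p (fun ω => ω.2.2) (fun ω => ω.2.1) (fun ω => (ω.1, φ (ω.1, ω.2.1))) ≤ ε := by
  have hcross := sum_mul_log_le_sum_mul_log_pAZ φ hp0 π hπpos fun s z => (hπsum s z).le
  have hgap : CMI p (fun ω => ω.2.2) (fun ω => ω.2.1) (fun ω => (ω.1, φ (ω.1, ω.2.1))) ≤
      Lact p φ π - HASG p := by
    rw [CMI_A_G_SZ_eq φ hp0, Lact_eq φ hp0 π, HASG_eq hp0]
    simp only [mul_sub, sum_sub_distrib]
    linarith
  exact ⟨hgap, fun ε _ hε => hgap.trans (by linarith)⟩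

/-- **Near-optimal actor NLL implies approximate action sufficiency.**
With `Z = φ(S,G)`, for every strictly positive policy `π`:
`I(A;G|S,Z) ≤ L_act(π;φ) − H(A|S,G)`; consequently, if `L_act(π;φ) ≤ H(A|S,G) + ε`
for some `ε ≥ 0`, then `I(A;G|S,Z) ≤ ε`. -/
theorem cmi_le_excess_logloss {𝒮 𝒢 𝒜 𝒵 : Type*}
    [Fintype 𝒮] [Fintype 𝒢] [Fintype 𝒜] [Fintype 𝒵]
    [Nonempty 𝒮] [Nonempty 𝒢] [Nonempty 𝒜] [Nonempty 𝒵]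
    (p : 𝒮 × 𝒢 × 𝒜 → ℝ) (hp0 : ∀ ω, 0 ≤ p ω) (hp1 : ∑ ω : 𝒮 × 𝒢 × 𝒜, p ω = 1)
    (φ : 𝒮 × 𝒢 → 𝒵) (π : 𝒮 → 𝒵 → 𝒜 → ℝ)
    (hπpos : ∀ s z a, 0 < π s z a) (hπsum : ∀ s z, ∑ a : 𝒜, π s z a = 1) :
    CMI p (fun ω => ω.2.2) (fun ω => ω.2.1) (fun ω => (ω.1, φ (ω.1, ω.2.1))) ≤
        Lact p φ π - HASG p ∧
      ∀ ε : ℝ, 0 ≤ ε → Lact p φ π ≤ HASG p + ε →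
        CMI p (fun ω => ω.2.2) (fun ω => ω.2.1) (fun ω => (ω.1, φ (ω.1, ω.2.1))) ≤ ε :=
  cmi_le_excess_logloss_general p hp0 φ π hπpos hπsum
end
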